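/- arXiv:2101.04519 — 2 statements merged into one kernel-verified Lean document; each statement's English description precedes it below -/
import Mathlib

section
/- Let p be an odd prime and q an integer not divisible by p. Then the Legendre symbol (q/p) equals ∏_{r=1}^{(p-1)/2} tan(2πqr/p) / tan(2πr/p). -/
open Real Finset

private lemma tan_ne_zero_aux {θ : ℝ} (h0 : 0 < θ) (h1 : θ < π) (h2 : θ ≠ π / 2) :
    Real.tan θ ≠ 0 := by
  rcases lt_or_gt_of_ne h2 with h | h
  · exact ne_of_gt (Real.tan_pos_of_pos_of_lt_pi_div_two h0 h)
  · have hlt : Real.tan (θ - π) < 0 :=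
      Real.tan_neg_of_neg_of_pi_div_two_lt (by linarith) (by linarith)
    rw [Real.tan_sub_pi] at hlt
    exact ne_of_lt hlt

theorem legendre_eq_prod_tan (p : ℕ) [Fact p.Prime] (hodd : Odd p)
    (q : ℤ) (hq : ¬ (p : ℤ) ∣ q) :
    (legendreSym p q : ℝ) =
      ∏ r ∈ Finset.Icc 1 ((p - 1) / 2),
        Real.tan (2 * π * q * r / p) / Real.tan (2 * π * r / p) := by
  have hp := Fact.out (p := p.Prime)
  have hp2 : p ≠ 2 := by rintro rfl; exact (by decide : ¬ Odd 2) hodd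
  haveI : NeZero p := ⟨hp.ne_zero⟩
  have hq0 : ((q : ZMod p)) ≠ 0 := by
    rwa [Ne, ZMod.intCast_zmod_eq_zero_iff_dvd]
  obtain ⟨t, ht⟩ := hodd
  have hpR : (0 : ℝ) < p := by exact_mod_cast hp.pos
  have hSet : Finset.Icc 1 ((p - 1) / 2) = Finset.Ico 1 (p / 2).succ := by
    rw [← Finset.Ico_add_one_right_eq_Icc]
    congr 1
    omega
  set S := Finset.Ico 1 (p / 2).succ with hS
  rw [hSet]
  have hmemS : ∀ x ∈ S, 1 ≤ x ∧ x ≤ p / 2 := by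
    intro x hx
    rw [hS, Finset.mem_Ico] at hx
    omega
  -- nonvanishing of the denominators
  have htanne : ∀ x : ℕ, 1 ≤ x → x ≤ p / 2 → Real.tan (2 * π * x / p) ≠ 0 := by
    intro x h1 h2
    apply tan_ne_zero_aux
    · have : (0:ℝ) < x := by exact_mod_cast h1
      positivity
    · have hxp : (2 * x : ℝ) < p := by
        have : 2 * x < p := by omega
        exact_mod_cast this
      rw [div_lt_iff₀ hpR]
      calc 2 * π * x = π * (2 * x) := by ring
        _ < π * p := by nlinarith [pi_pos]
    · intro hcon
      have h4 : (4 * x : ℝ) = p := by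
        field_simp at hcon
        nlinarith [pi_pos]
      have : 4 * x = p := by exact_mod_cast h4
      omega
  -- key pointwise identity
  have key : ∀ x ∈ S, Real.tan (2 * π * q * x / p) =
      (if p / 2 < ((q : ZMod p) * x).val then (-1 : ℝ) else 1) *
        Real.tan (2 * π * (((q : ZMod p) * x).valMinAbs.natAbs : ℕ) / p) := by
    intro x _
    set m := ((q : ZMod p) * x).valMinAbs with hm
    have hcast : ((m : ℤ) : ZMod p) = (q : ZMod p) * x := ZMod.coe_valMinAbs _
    have hdvd : (p : ℤ) ∣ q * x - m := by
      rw [← ZMod.intCast_zmod_eq_zero_iff_dvd]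
      push_cast
      rw [hcast]
      ring
    obtain ⟨k, hk⟩ := hdvd
    have hreal : (q : ℝ) * x = m + p * k := by
      have h' := congrArg (fun z : ℤ => (z : ℝ)) hk
      push_cast at h'
      linarith
    have harg : 2 * π * q * x / p = 2 * π * m / p + (2 * k) * π := by
      have hp' : (p : ℝ) ≠ 0 := ne_of_gt hpR
      field_simp
      linear_combination hreal
    rw [harg, show (2:ℝ) * (k:ℝ) * π = ((2 * k : ℤ) : ℝ) * π by push_cast; ring,
      Real.tan_periodic.int_mul (2 * k) _]
    by_cases hnn : 0 ≤ m
    · have hval : ((q : ZMod p) * x).val ≤ p / 2 := (ZMod.valMinAbs_nonneg_iff _).1 hnn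
      rw [if_neg (by omega), one_mul]
      have hnatabs : ((m.natAbs : ℕ) : ℝ) = (m : ℝ) := by
        rw [Nat.cast_natAbs]
        exact_mod_cast abs_of_nonneg hnn
      rw [hnatabs]
    · have hval : ¬ ((q : ZMod p) * x).val ≤ p / 2 := by
        rwa [← ZMod.valMinAbs_nonneg_iff]
      rw [if_pos (by omega)]
      push_neg at hnn
      have hnatabs : ((m.natAbs : ℕ) : ℝ) = -(m : ℝ) := by
        rw [Nat.cast_natAbs]
        exact_mod_cast abs_of_nonpos (le_of_lt hnn)
      have : 2 * π * (m.natAbs : ℕ) / p = -(2 * π * m / p) := by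
        rw [hnatabs]; ring
      rw [this, Real.tan_neg]
      ring
  -- transfer product over the bijection
  have hbij : ∏ x ∈ S, Real.tan (2 * π * (((q : ZMod p) * x).valMinAbs.natAbs : ℕ) / p)
      = ∏ x ∈ S, Real.tan (2 * π * x / p) := by
    have hmul := ZMod.Ico_map_valMinAbs_natAbs_eq_Ico_map_id p (q : ZMod p) hq0
    calc ∏ x ∈ S, Real.tan (2 * π * (((q : ZMod p) * x).valMinAbs.natAbs : ℕ) / p)
        = ((S.1.map fun x : ℕ => ((q : ZMod p) * x).valMinAbs.natAbs).map
            fun n : ℕ => Real.tan (2 * π * n / p)).prod := by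
          rw [Multiset.map_map]
          exact Finset.prod_eq_multiset_prod _ _
      _ = ((S.1.map fun a : ℕ => a).map fun n : ℕ => Real.tan (2 * π * n / p)).prod := by
          rw [hmul]
      _ = ∏ x ∈ S, Real.tan (2 * π * x / p) := by
          rw [Multiset.map_map]
          exact (Finset.prod_eq_multiset_prod _ _).symm
  -- the product of the signs equals the Legendre symbol
  have hsign : ∏ x ∈ S, (if p / 2 < ((q : ZMod p) * x).val then (-1 : ℝ) else 1)
      = (legendreSym p q : ℝ) := by
    rw [Finset.prod_ite, Finset.prod_const, Finset.prod_const, one_pow, mul_one]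
    rw [ZMod.gauss_lemma hp2 hq0]
    push_cast
    rfl
  -- put everything together
  have hprodne : ∀ x ∈ S, Real.tan (2 * π * x / p) ≠ 0 := fun x hx =>
    htanne x (hmemS x hx).1 (hmemS x hx).2
  calc (legendreSym p q : ℝ)
      = (∏ x ∈ S, (if p / 2 < ((q : ZMod p) * x).val then (-1 : ℝ) else 1)) *
          ((∏ x ∈ S, Real.tan (2 * π * x / p)) / (∏ x ∈ S, Real.tan (2 * π * x / p))) := by
        rw [hsign, div_self (Finset.prod_ne_zero_iff.2 hprodne), mul_one]
    _ = ∏ x ∈ S, Real.tan (2 * π * q * x / p) / Real.tan (2 * π * x / p) := by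
        rw [Finset.prod_div_distrib, Finset.prod_congr rfl key, Finset.prod_mul_distrib, hbij]
        ring
end

section
/- For an odd natural number q and real x with sin x ≠ 0, sin(qx)/sin(x) is a polynomial in sin²x of degree (q-1)/2 with integer coefficients and leading coefficient (-4)^{(q-1)/2}; in particular sin(qx) = (-4)^{(q-1)/2} ∏_{r=1}^{(q-1)/2} (sin²x - sin²(2πr/q)) · sin x. -/
open Real Finset Polynomial

noncomputable def gpoly : ℕ → Polynomial ℤ
  | 0 => 1
  | 1 => C 3 - C 4 * X
  | (m+2) => (C 2 - C 4 * X) * gpoly (m+1) - gpoly m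

lemma gpoly_natDegree_le : ∀ m, (gpoly m).natDegree ≤ m
  | 0 => by simp [gpoly]
  | 1 => by unfold gpoly; compute_degree
  | (m+2) => by
    unfold gpoly
    refine le_trans (natDegree_sub_le _ _) (max_le ?_ ?_)
    · refine le_trans (natDegree_mul_le) ?_
      have h1 : (C 2 - C 4 * X : Polynomial ℤ).natDegree ≤ 1 := by compute_degree
      have := gpoly_natDegree_le (m+1)
      omega
    · exact le_trans (gpoly_natDegree_le m) (by omega)

lemma gpoly_coeff : ∀ m, (gpoly m).coeff m = (-4) ^ m
  | 0 => by simp [gpoly]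
  | 1 => by simp [gpoly, coeff_sub, coeff_C_mul, coeff_X]
  | (m+2) => by
    have e : (C 2 - C 4 * X : Polynomial ℤ) * gpoly (m+1) - gpoly m
        = C 2 * gpoly (m+1) - C 4 * (X * gpoly (m+1)) - gpoly m := by ring
    have h1 : (gpoly (m+1)).coeff (m+2) = 0 :=
      coeff_eq_zero_of_natDegree_lt (lt_of_le_of_lt (gpoly_natDegree_le (m+1)) (by omega))
    have h2 : (gpoly m).coeff (m+2) = 0 :=
      coeff_eq_zero_of_natDegree_lt (lt_of_le_of_lt (gpoly_natDegree_le m) (by omega))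
    show ((C 2 - C 4 * X : Polynomial ℤ) * gpoly (m+1) - gpoly m).coeff (m+2) = _
    rw [e]
    simp only [coeff_sub, coeff_C_mul, coeff_X_mul, h1, h2, gpoly_coeff (m+1)]
    ring

lemma sin_gpoly : ∀ (m : ℕ) (x : ℝ),
    Real.sin ((2*m+1 : ℝ) * x)
      = ((gpoly m).map (Int.castRingHom ℝ)).eval (Real.sin x ^ 2) * Real.sin x
  | 0, x => by norm_num [gpoly]
  | 1, x => by
    have h3 : ((2*(1:ℕ)+1 : ℝ)) * x = 3 * x := by norm_num
    rw [h3, Real.sin_three_mul]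
    simp [gpoly]
    ring
  | (m+2), x => by
    have key : Real.sin ((2*(m+2:ℕ)+1 : ℝ) * x)
        = 2 * Real.cos (2*x) * Real.sin ((2*(m+1:ℕ)+1 : ℝ) * x)
          - Real.sin ((2*(m:ℕ)+1 : ℝ) * x) := by
      have e1 : (2*(m+2:ℕ)+1 : ℝ) * x = (2*(m+1:ℕ)+1 : ℝ) * x + 2*x := by push_cast; ring
      have e2 : (2*(m:ℕ)+1 : ℝ) * x = (2*(m+1:ℕ)+1 : ℝ) * x - 2*x := by push_cast; ring
      rw [e1, e2, Real.sin_add, Real.sin_sub]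
      ring
    rw [key, sin_gpoly (m+1) x, sin_gpoly m x]
    have hc : Real.cos (2*x) = 1 - 2 * Real.sin x ^ 2 := by
      rw [Real.cos_two_mul', Real.cos_sq']
      ring
    rw [hc]
    rw [show gpoly (m+2) = (C 2 - C 4 * X) * gpoly (m+1) - gpoly m from rfl]
    simp only [Polynomial.map_sub, Polynomial.map_mul, Polynomial.map_C, Polynomial.map_X,
      eval_sub, eval_mul, eval_C, eval_X, Polynomial.map_ofNat, Polynomial.eval_ofNat, map_ofNat]
    push_cast
    ring

lemma sin_sq_injOn (m : ℕ) :
    Set.InjOn (fun r : ℕ => Real.sin (2 * π * r / (2*m+1)) ^ 2) (Finset.Icc 1 m) := by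
  intro r hr s hs h
  simp only [Finset.coe_Icc, Set.mem_Icc] at hr hs
  have hq : (0:ℝ) < 2*m+1 := by positivity
  set θr : ℝ := 2 * π * r / (2*m+1) with hθr
  set θs : ℝ := 2 * π * s / (2*m+1) with hθs
  have hrpos : 0 < θr := by
    have : (0:ℝ) < r := by exact_mod_cast hr.1
    positivity
  have hspos : 0 < θs := by
    have : (0:ℝ) < s := by exact_mod_cast hs.1
    positivity
  have hrlt : θr < π := by
    rw [hθr, div_lt_iff₀ hq]
    have : (r:ℝ) ≤ m := by exact_mod_cast hr.2
    nlinarith [pi_pos]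
  have hslt : θs < π := by
    rw [hθs, div_lt_iff₀ hq]
    have : (s:ℝ) ≤ m := by exact_mod_cast hs.2
    nlinarith [pi_pos]
  -- cos (2θr) = cos (2θs)
  have hcos : Real.cos (2*θr) = Real.cos (2*θs) := by
    rw [Real.cos_two_mul', Real.cos_two_mul', Real.cos_sq', Real.cos_sq']
    simp only at h
    rw [h]
  rw [Real.cos_eq_cos_iff] at hcos
  obtain ⟨k, hk | hk⟩ := hcos
  · -- 2θs = 2kπ + 2θr  ⇒ θs - θr = kπ ⇒ k = 0 ⇒ θs = θr
    have hk0 : k = 0 := by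
      have h1 : (k:ℝ) * π = θs - θr := by linarith
      have h2 : -π < (k:ℝ) * π := by nlinarith
      have h3 : (k:ℝ) * π < π := by nlinarith
      have := pi_pos
      have hb1 : (-1:ℝ) < k := by nlinarith
      have hb2 : (k:ℝ) < 1 := by nlinarith
      have hb1' : (-1:ℤ) < k := by exact_mod_cast hb1
      have hb2' : k < (1:ℤ) := by exact_mod_cast hb2
      omega
    subst hk0
    have hrs : θs = θr := by push_cast at hk; linarith
    rw [hθr, hθs, div_eq_div_iff hq.ne' hq.ne'] at hrs
    have : (s:ℝ) = r := by
      have h2 := mul_right_cancel₀ hq.ne' hrs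
      have h2π : (2*π:ℝ) ≠ 0 := by positivity
      have h3 : (2*π:ℝ) * s = (2*π:ℝ) * r := by ring_nf; ring_nf at h2; linarith
      exact mul_left_cancel₀ h2π h3
    have : s = r := by exact_mod_cast this
    simp [this]
  · -- 2θs = 2kπ - 2θr ⇒ θr + θs = kπ ⇒ k = 1 ⇒ 2(r+s) = 2m+1, contradiction
    exfalso
    have h1 : (k:ℝ) * π = θs + θr := by linarith
    have := pi_pos
    have hb1 : (0:ℝ) < k := by nlinarith
    have hb2 : (k:ℝ) < 2 := by nlinarith
    have hk1 : k = 1 := by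
      have hb1' : (0:ℤ) < k := by exact_mod_cast hb1
      have hb2' : k < (2:ℤ) := by exact_mod_cast hb2
      omega
    subst hk1
    simp only [Int.cast_one, one_mul] at h1
    rw [hθr, hθs] at h1
    have hq' : (2*(m:ℝ)+1) ≠ 0 := ne_of_gt hq
    field_simp at h1
    have h1'' : π * (2*(m:ℝ)+1) = π * (2*((r:ℝ)+s)) := by rw [h1]; ring
    have hc := mul_left_cancel₀ pi_ne_zero h1''
    have : 2*m+1 = 2*(r+s) := by exact_mod_cast hc
    omega

lemma gpoly_natDegree (m : ℕ) : (gpoly m).natDegree = m :=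
  le_antisymm (gpoly_natDegree_le m)
    (le_natDegree_of_ne_zero (by rw [gpoly_coeff]; positivity))

lemma gpoly_leadingCoeff (m : ℕ) : (gpoly m).leadingCoeff = (-4) ^ m := by
  rw [leadingCoeff, gpoly_natDegree, gpoly_coeff]

lemma sin_theta_pos {m r : ℕ} (hr : r ∈ Finset.Icc 1 m) :
    0 < Real.sin (2 * π * r / (2*m+1)) := by
  simp only [Finset.mem_Icc] at hr
  have hq : (0:ℝ) < 2*m+1 := by positivity
  apply Real.sin_pos_of_pos_of_lt_pi
  · have : (0:ℝ) < r := by exact_mod_cast hr.1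
    positivity
  · rw [div_lt_iff₀ hq]
    have : (r:ℝ) ≤ m := by exact_mod_cast hr.2
    nlinarith [pi_pos]

lemma gpoly_root {m r : ℕ} (hr : r ∈ Finset.Icc 1 m) :
    ((gpoly m).map (Int.castRingHom ℝ)).eval (Real.sin (2 * π * r / (2*m+1)) ^ 2) = 0 := by
  have hq : (0:ℝ) < 2*m+1 := by positivity
  have h := sin_gpoly m (2 * π * r / (2*m+1))
  have he : (2*(m:ℝ)+1) * (2 * π * r / (2*m+1)) = 2 * π * r := by
    field_simp
  rw [he] at h
  have hz : Real.sin (2 * π * r) = 0 := by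
    have : (2 * π * r : ℝ) = 2 * r * π := by ring
    rw [this]
    have h2 : ((2*r : ℕ) : ℝ) * π = 2 * (r:ℝ) * π := by push_cast; ring
    rw [← h2]
    exact Real.sin_nat_mul_pi (2*r)
  rw [hz] at h
  have hs := sin_theta_pos hr
  have := h.symm
  rcases mul_eq_zero.mp this with h' | h'
  · exact h'
  · exact absurd h' (ne_of_gt hs)

lemma gpoly_eq_prod (m : ℕ) :
    (gpoly m).map (Int.castRingHom ℝ)
      = C ((-4:ℝ)^m) * ∏ r ∈ Finset.Icc 1 m, (X - C (Real.sin (2 * π * r / (2*m+1)) ^ 2)) := by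
  rcases Nat.eq_zero_or_pos m with rfl | hm
  · simp [gpoly]
  set P := (gpoly m).map (Int.castRingHom ℝ) with hP
  set Q := C ((-4:ℝ)^m) * ∏ r ∈ Finset.Icc 1 m, (X - C (Real.sin (2 * π * r / (2*m+1)) ^ 2)) with hQ
  have hmonic : (∏ r ∈ Finset.Icc 1 m, (X - C (Real.sin (2 * π * r / (2*m+1)) ^ 2))).Monic :=
    monic_prod_of_monic _ _ (fun r _ => monic_X_sub_C _)
  have hproddeg : (∏ r ∈ Finset.Icc 1 m, (X - C (Real.sin (2 * π * r / (2*m+1)) ^ 2))).natDegree = m := by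
    rw [natDegree_prod _ _ (fun r _ => X_sub_C_ne_zero _)]
    rw [Finset.sum_congr rfl (fun r _ => natDegree_X_sub_C _)]
    simp
  have hPdeg : P.natDegree ≤ m := le_trans natDegree_map_le (gpoly_natDegree_le m)
  have hQdeg : Q.natDegree ≤ m := by
    rw [hQ]
    refine le_trans (natDegree_C_mul_le _ _) (le_of_eq hproddeg)
  have hPm : P.coeff m = (-4:ℝ)^m := by
    rw [hP, coeff_map, gpoly_coeff]
    simp
  have hQm : Q.coeff m = (-4:ℝ)^m := by
    have hc := hmonic.coeff_natDegree
    rw [hproddeg] at hc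
    rw [hQ, coeff_C_mul, hc, mul_one]
  set D := P - Q with hD
  have hDdeg : D.natDegree < m := by
    have h1 : D.natDegree ≤ m := le_trans (natDegree_sub_le _ _) (max_le hPdeg hQdeg)
    have h2 : D.coeff m = 0 := by simp [hD, hPm, hQm]
    rcases eq_or_ne D 0 with h0 | h0
    · simpa [h0] using hm
    · rcases lt_or_eq_of_le h1 with h | h
      · exact h
      · exact absurd (by rw [leadingCoeff, h]; exact h2) (leadingCoeff_ne_zero.mpr h0)
  have hDzero : D = 0 := by
    apply Polynomial.eq_zero_of_natDegree_lt_card_of_eval_eq_zero' D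
      ((Finset.Icc 1 m).image (fun r : ℕ => Real.sin (2 * π * r / (2*m+1)) ^ 2))
    · intro i hi
      simp only [Finset.mem_image] at hi
      obtain ⟨r, hr, rfl⟩ := hi
      have h1 : P.eval (Real.sin (2 * π * r / (2*m+1)) ^ 2) = 0 := gpoly_root hr
      have h2 : Q.eval (Real.sin (2 * π * r / (2*m+1)) ^ 2) = 0 := by
        rw [hQ, eval_mul, eval_prod]
        rw [Finset.prod_eq_zero hr (by simp)]
        ring
      simp [hD, eval_sub, h1, h2]
    · rwa [Finset.card_image_of_injOn (sin_sq_injOn m), Nat.card_Icc, Nat.add_sub_cancel]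
  have := sub_eq_zero.mp hDzero
  exact this

theorem sin_mul_odd (q : ℕ) (hq : Odd q) :
    ∃ f : Polynomial ℤ, f.natDegree = (q - 1) / 2 ∧
      f.leadingCoeff = (-4 : ℤ) ^ ((q - 1) / 2) ∧
      ∀ x : ℝ, Real.sin x ≠ 0 →
        Real.sin (q * x) / Real.sin x =
          (f.map (Int.castRingHom ℝ)).eval (Real.sin x ^ 2) ∧
        Real.sin (q * x) =
          (-4 : ℝ) ^ ((q - 1) / 2) *
            (∏ r ∈ Finset.Icc 1 ((q - 1) / 2),
              (Real.sin x ^ 2 - Real.sin (2 * π * r / q) ^ 2)) * Real.sin x := by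
  obtain ⟨m, hm⟩ := hq
  have hmq : (q - 1) / 2 = m := by omega
  refine ⟨gpoly m, by rw [hmq, gpoly_natDegree], by rw [hmq, gpoly_leadingCoeff], ?_⟩
  intro x hx
  have hqr : (q:ℝ) = 2*m+1 := by rw [hm]; push_cast; ring
  have h1 := sin_gpoly m x
  rw [← hqr] at h1
  constructor
  · rw [h1, mul_div_cancel_right₀ _ hx]
  · rw [h1, hmq]
    have h2 := gpoly_eq_prod m
    rw [← hqr] at h2
    rw [h2, eval_mul, eval_C, eval_prod]
    simp only [eval_sub, eval_X, eval_C]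
end
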